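/- arXiv:1607.04475 — 5 statements merged into one kernel-verified Lean document; each statement's English description precedes it below -/
import Mathlib

section
/- Let p be a prime and let (X,(x_n)_{n∈ℤ}) be a ℤ-system of order p. Then: (i) x_n^p = 1 and x_n ≠ 1 for every n ∈ ℤ; (ii) for all integers n < m one has [x_n,x_m] ∈ X_{n+1,m-1} (where X_{n+1,m-1} is the trivial subgroup if n+1 > m-1); (iii) every x ∈ X with x ≠ 1 can be written as x = x_n^{e_n} x_{n+1}^{e_{n+1}} ⋯ x_m^{e_m} for some integers n ≤ m and exponents e_n,…,e_m ∈ {0,…,p-1} with e_n ≠ 0 ≠ e_m, and the data n, m, e_n,…,e_m are uniquely determined by x. -/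
/-!
Comparing orders, `x n ∉ X_{n+1,m}`; as `⟨x n⟩` has prime order it meets `X_{n+1,m}`
trivially, so `x_n^a u = x_n^b v` with `u, v ∈ X_{n+1,m}` forces `x_n^a = x_n^b`. By induction the
products `x_n^{e_n} ⋯ x_m^{e_m}` with `0 ≤ e_k < p` are pairwise distinct, and since there are
`p^{m-n+1}` of them they exhaust `X_{n,m}`. Discarding zero exponents at the ends gives a normal
form; padding two normal forms with zeros to a common window gives uniqueness. In particular
`X_{a,b} ∩ X_{c,d} ≤ X_{max a c, min b d}`.

For (ii): `X_{n+1,m}` and `X_{n,m-1}` have index `p` in the `p`-group `X_{n,m}`, so both are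
normalized by it, and `⁅x n, x m⁆` lies in each of them, hence in `X_{n+1,m-1}`.
-/

/-- The subgroup `X_{n,m}` generated by the `x_k` with `n ≤ k ≤ m`. -/
def XIcc {X : Type*} [Group X] (x : ℤ → X) (n m : ℤ) : Subgroup X :=
  Subgroup.closure (x '' Set.Icc n m)

/-- The subgroup `X_{n,∞}` generated by the `x_k` with `n ≤ k`. -/
def XIci {X : Type*} [Group X] (x : ℤ → X) (n : ℤ) : Subgroup X :=
  Subgroup.closure (x '' Set.Ici n)

/-- The subgroup `X_{-∞,m}` generated by the `x_k` with `k ≤ m`. -/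
def XIic {X : Type*} [Group X] (x : ℤ → X) (m : ℤ) : Subgroup X :=
  Subgroup.closure (x '' Set.Iic m)

/-- A ℤ-system of order `p`: a group `X` together with a family `(x_n)_{n ∈ ℤ}` such that
(ZS1) the `x_n` generate `X`, (ZS2) `⟨x_k : n ≤ k ≤ m⟩` has order `p^(m-n+1)`, and
(ZS3) there is a (shift) automorphism `t` of `X` with `t (x n) = x (n+2)` for all `n`. -/
structure IsZSystem (p : ℕ) {X : Type*} [Group X] (x : ℤ → X) : Prop where
  closure_range : Subgroup.closure (Set.range x) = ⊤
  card_Icc : ∀ n m : ℤ, n ≤ m → Nat.card (XIcc x n m) = p ^ (m - n + 1).toNat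
  exists_shift : ∃ t : MulAut X, ∀ n : ℤ, t (x n) = x (n + 2)

/-- The ordered product `x_n^{e_n} x_{n+1}^{e_{n+1}} ⋯ x_m^{e_m}`. -/
def prodForm {X : Type*} [Group X] (x : ℤ → X) (n m : ℤ) (e : ℤ → ℕ) : X :=
  ((List.range (m - n + 1).toNat).map (fun i : ℕ => x (n + (i : ℤ)) ^ e (n + (i : ℤ)))).prod

/-- `IsNormalForm p x g n m e` says that `g = x_n^{e_n} ⋯ x_m^{e_m}` with `n ≤ m`, all
exponents in `{0, …, p-1}` and `e n ≠ 0 ≠ e m`; in this case `𝐧(g) = n` and `𝐦(g) = m`. -/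
def IsNormalForm (p : ℕ) {X : Type*} [Group X] (x : ℤ → X) (g : X) (n m : ℤ)
    (e : ℤ → ℕ) : Prop :=
  n ≤ m ∧ (∀ k : ℤ, e k < p) ∧ e n ≠ 0 ∧ e m ≠ 0 ∧ g = prodForm x n m e

open scoped commutatorElement

theorem Subgroup.le_normalizer_of_card_eq_prime_pow_succ {G : Type*} [Group G] {p k : ℕ}
    (hp : p.Prime) {H K : Subgroup G} (hHK : H ≤ K) (hK : Nat.card K = p ^ (k + 1))
    (hH : Nat.card H = p ^ k) : K ≤ normalizer H := by
  rw [← normal_subgroupOf_iff_le_normalizer hHK]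
  apply normal_of_index_eq_minFac_card
  have hmul := relIndex_mul_relIndex ⊥ H K bot_le hHK
  rw [relIndex_bot_left, relIndex_bot_left, hH, hK, pow_succ] at hmul
  change H.relIndex K = _
  rw [hK, hp.pow_minFac k.succ_ne_zero]
  exact Nat.eq_of_mul_eq_mul_left (pow_pos hp.pos k) hmul

namespace ZSystem

variable {X : Type*} [Group X] {x : ℤ → X}

theorem mem_XIcc {n m k : ℤ} (hn : n ≤ k) (hm : k ≤ m) : x k ∈ XIcc x n m :=
  Subgroup.subset_closure ⟨k, ⟨hn, hm⟩, rfl⟩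

theorem XIcc_mono {n m n' m' : ℤ} (hn : n' ≤ n) (hm : m ≤ m') : XIcc x n m ≤ XIcc x n' m' :=
  Subgroup.closure_mono (Set.image_mono (Set.Icc_subset_Icc hn hm))

theorem exists_mem_XIcc (hx : Subgroup.closure (Set.range x) = ⊤) (g : X) :
    ∃ a b, g ∈ XIcc x a b := by
  have hg : g ∈ Subgroup.closure (Set.range x) := hx ▸ Subgroup.mem_top g
  induction hg using Subgroup.closure_induction with
  | mem _ hy =>
    obtain ⟨k, rfl⟩ := hy
    exact ⟨k, k, mem_XIcc le_rfl le_rfl⟩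
  | one => exact ⟨0, 0, one_mem _⟩
  | mul _ _ _ _ hy hz =>
    obtain ⟨a, b, hy⟩ := hy
    obtain ⟨c, d, hz⟩ := hz
    exact ⟨min a c, max b d, mul_mem (XIcc_mono (min_le_left a c) (le_max_left b d) hy)
      (XIcc_mono (min_le_right a c) (le_max_right b d) hz)⟩
  | inv _ _ hy =>
    obtain ⟨a, b, hy⟩ := hy
    exact ⟨a, b, inv_mem hy⟩

theorem XIcc_of_lt {n m : ℤ} (h : m < n) : XIcc x n m = ⊥ := by
  rw [XIcc, Set.Icc_eq_empty_of_lt h, Set.image_empty, Subgroup.closure_empty]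

theorem XIcc_self (n : ℤ) : XIcc x n n = Subgroup.zpowers (x n) := by
  rw [XIcc, Set.Icc_self, Set.image_singleton, Subgroup.zpowers_eq_closure]

theorem prodForm_of_lt {n m : ℤ} (h : m < n) (e : ℤ → ℕ) : prodForm x n m e = 1 := by
  simp [prodForm, show (m - n + 1).toNat = 0 by omega]

theorem prodForm_eq_pow_mul {n m : ℤ} (h : n ≤ m) (e : ℤ → ℕ) :
    prodForm x n m e = x n ^ e n * prodForm x (n + 1) m e := by
  rw [prodForm, prodForm, show (m - n + 1).toNat = (m - (n + 1) + 1).toNat + 1 by omega,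
    List.range_succ_eq_map]
  simp only [List.map_cons, List.prod_cons, List.map_map, Function.comp_def]
  push_cast
  simp only [add_zero, add_assoc, add_comm (1 : ℤ)]

theorem prodForm_eq_mul_pow {n m : ℤ} (h : n ≤ m) (e : ℤ → ℕ) :
    prodForm x n m e = prodForm x n (m - 1) e * x m ^ e m := by
  rw [prodForm, prodForm, show (m - n + 1).toNat = (m - 1 - n + 1).toNat + 1 by omega,
    List.range_succ, List.map_append, List.prod_append, List.map_singleton, List.prod_singleton,
    show n + ((m - 1 - n + 1).toNat : ℤ) = m by omega]

theorem prodForm_congr {n m : ℤ} {e e' : ℤ → ℕ} (h : ∀ k, n ≤ k → k ≤ m → e k = e' k) :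
    prodForm x n m e = prodForm x n m e' := by
  refine congrArg List.prod (List.map_congr_left fun i hi => ?_)
  rw [List.mem_range] at hi
  rw [h _ (by omega) (by omega)]

theorem prodForm_mem (n m : ℤ) (e : ℤ → ℕ) : prodForm x n m e ∈ XIcc x n m := by
  refine list_prod_mem fun g hg => ?_
  obtain ⟨i, hi, rfl⟩ := List.mem_map.mp hg
  rw [List.mem_range] at hi
  exact pow_mem (mem_XIcc (by omega) (by omega)) _

theorem prodForm_eq_one {n m : ℤ} {e : ℤ → ℕ} (h : ∀ k, n ≤ k → k ≤ m → e k = 0) :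
    prodForm x n m e = 1 := by
  rw [prodForm_congr (e' := 0) h]
  simp [prodForm]

theorem prodForm_trim_left {N n m : ℤ} {e : ℤ → ℕ} (hN : N ≤ n)
    (h : ∀ k, N ≤ k → k < n → e k = 0) : prodForm x N m e = prodForm x n m e := by
  induction n, hN using Int.leInduction with
  | base => rfl
  | succ n hN ih =>
    rw [ih fun k hk hkn => h k hk (by omega)]
    rcases le_or_gt n m with hnm | hmn
    · rw [prodForm_eq_pow_mul hnm, h n hN (by omega), pow_zero, one_mul]
    · rw [prodForm_of_lt hmn, prodForm_of_lt (by omega)]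

theorem prodForm_trim_right {n m M : ℤ} {e : ℤ → ℕ} (hM : m ≤ M)
    (h : ∀ k, m < k → k ≤ M → e k = 0) : prodForm x n M e = prodForm x n m e := by
  induction M, hM using Int.leInduction with
  | base => rfl
  | succ M hM ih =>
    rw [← ih fun k hk hkM => h k hk (by omega)]
    rcases le_or_gt n (M + 1) with hnM | hMn
    · rw [prodForm_eq_mul_pow hnM, h (M + 1) (by omega) le_rfl, pow_zero, mul_one,
        add_sub_cancel_right]
    · rw [prodForm_of_lt hMn, prodForm_of_lt (by omega)]

theorem prodForm_trim {N n m M : ℤ} {e : ℤ → ℕ} (hN : N ≤ n) (hM : m ≤ M)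
    (hl : ∀ k, N ≤ k → k < n → e k = 0) (hr : ∀ k, m < k → k ≤ M → e k = 0) :
    prodForm x N M e = prodForm x n m e :=
  (prodForm_trim_left hN hl).trans (prodForm_trim_right hM hr)

theorem prodForm_indicator {N n m M : ℤ} (hN : N ≤ n) (hM : m ≤ M) (e : ℤ → ℕ) :
    prodForm x N M ((Set.Icc n m).indicator e) = prodForm x n m e := by
  rw [prodForm_trim hN hM (fun k _ hk => Set.indicator_of_notMem (by simp; omega) _)
    (fun k hk _ => Set.indicator_of_notMem (by simp; omega) _)]
  exact prodForm_congr fun k hn hm => Set.indicator_of_mem (Set.mem_Icc.mpr ⟨hn, hm⟩) _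


section

variable {p : ℕ} (hp : p.Prime)
  (hcard : ∀ n m : ℤ, n ≤ m → Nat.card (XIcc x n m) = p ^ (m - n + 1).toNat)
include hcard

theorem card_XIcc (n m : ℤ) : Nat.card (XIcc x n m) = p ^ (m - n + 1).toNat := by
  rcases le_or_gt n m with h | h
  · exact hcard n m h
  · rw [XIcc_of_lt h, Subgroup.card_bot, show (m - n + 1).toNat = 0 by omega, pow_zero]

theorem orderOf_eq (n : ℤ) : orderOf (x n) = p := by
  simpa [XIcc_self, Nat.card_zpowers] using hcard n n le_rfl

include hp

theorem finite_XIcc (n m : ℤ) : Finite (XIcc x n m) :=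
  Nat.finite_of_card_ne_zero (by rw [card_XIcc hcard]; exact pow_ne_zero _ hp.ne_zero)

theorem notMem_XIcc_succ {n m : ℤ} (h : n ≤ m) : x n ∉ XIcc x (n + 1) m := by
  intro hmem
  have hle : XIcc x n m ≤ XIcc x (n + 1) m := by
    refine Subgroup.closure_le _ |>.mpr ?_
    rintro - ⟨k, hk, rfl⟩
    rcases hk.1.eq_or_lt with rfl | hlt
    · exact hmem
    · exact mem_XIcc (by omega) hk.2
  have := finite_XIcc hp hcard (n + 1) m
  have hcard_le := Subgroup.card_le_of_le hle
  rw [card_XIcc hcard, card_XIcc hcard] at hcard_le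
  exact absurd hcard_le (not_le.mpr (Nat.pow_lt_pow_right hp.one_lt (by omega)))

theorem disjoint_zpowers_XIcc_succ {n m : ℤ} (h : n ≤ m) :
    Disjoint (Subgroup.zpowers (x n)) (XIcc x (n + 1) m) := by
  have hZ : Nat.card (Subgroup.zpowers (x n)) = p := by
    rw [Nat.card_zpowers, orderOf_eq hcard]
  have : Finite (Subgroup.zpowers (x n)) := Nat.finite_of_card_ne_zero (hZ ▸ hp.ne_zero)
  have hdvd := hZ ▸ Subgroup.card_dvd_of_le
    (inf_le_left : Subgroup.zpowers (x n) ⊓ XIcc x (n + 1) m ≤ _)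
  rcases hp.eq_one_or_self_of_dvd _ hdvd with h1 | hp'
  · exact disjoint_iff.mpr (Subgroup.card_eq_one.mp h1)
  · have heq := Subgroup.eq_of_le_of_card_ge inf_le_left (hZ.trans hp'.symm).le
    have hx : x n ∈ Subgroup.zpowers (x n) ⊓ XIcc x (n + 1) m :=
      heq.symm ▸ Subgroup.mem_zpowers (x n)
    exact absurd hx.2 (notMem_XIcc_succ hp hcard h)

theorem pow_eq_pow_of_pow_mul_eq_pow_mul {n m : ℤ} (h : n ≤ m) {a b : ℕ} {u v : X}
    (hu : u ∈ XIcc x (n + 1) m) (hv : v ∈ XIcc x (n + 1) m)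
    (huv : x n ^ a * u = x n ^ b * v) : x n ^ a = x n ^ b := by
  have hquot : (x n ^ b)⁻¹ * x n ^ a = v * u⁻¹ := by
    rw [inv_mul_eq_iff_eq_mul, ← mul_assoc, ← huv, mul_inv_cancel_right]
  refine (inv_mul_eq_one.mp ?_).symm
  refine Subgroup.disjoint_def.mp (disjoint_zpowers_XIcc_succ hp hcard h) ?_ ?_
  · exact mul_mem (inv_mem (pow_mem (Subgroup.mem_zpowers _) _))
      (pow_mem (Subgroup.mem_zpowers _) _)
  · exact hquot ▸ mul_mem hv (inv_mem hu)

theorem eq_of_prodForm_eq {n m : ℤ} {e e' : ℤ → ℕ} (he : ∀ k, e k < p) (he' : ∀ k, e' k < p)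
    (h : prodForm x n m e = prodForm x n m e') : ∀ k, n ≤ k → k ≤ m → e k = e' k := by
  intro k hnk hkm
  induction n, (show n ≤ m + 1 by omega) using Int.leInductionDown generalizing k with
  | base => omega
  | pred n hn ih =>
    have hn' : n - 1 ≤ m := by omega
    rw [prodForm_eq_pow_mul hn', prodForm_eq_pow_mul hn', sub_add_cancel] at h
    have hmem (e : ℤ → ℕ) : prodForm x n m e ∈ XIcc x (n - 1 + 1) m := by
      simpa using prodForm_mem n m e
    have hpow := pow_eq_pow_of_pow_mul_eq_pow_mul hp hcard hn' (hmem e) (hmem e') h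
    rcases hnk.eq_or_lt with rfl | hlt
    · exact pow_injOn_Iio_orderOf (by simpa [orderOf_eq hcard] using he _)
        (by simpa [orderOf_eq hcard] using he' _) hpow
    · rw [hpow, mul_right_inj] at h
      exact ih h k (by omega) hkm

theorem exists_prodForm_eq {n m : ℤ} {g : X} (hg : g ∈ XIcc x n m) :
    ∃ e : ℤ → ℕ, (∀ k, e k < p) ∧ prodForm x n m e = g := by
  let toExp (φ : Set.Icc n m → Fin p) (k : ℤ) : ℕ :=
    if hk : k ∈ Set.Icc n m then φ ⟨k, hk⟩ else 0
  have hlt (φ : Set.Icc n m → Fin p) (k : ℤ) : toExp φ k < p := by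
    unfold toExp; split_ifs
    exacts [(φ _).isLt, hp.pos]
  let f (φ : Set.Icc n m → Fin p) : XIcc x n m := ⟨prodForm x n m (toExp φ), prodForm_mem n m _⟩
  have hinj : f.Injective := by
    intro φ ψ hφψ
    funext ⟨k, hk⟩
    have := eq_of_prodForm_eq hp hcard (hlt φ) (hlt ψ) (congrArg Subtype.val hφψ) k hk.1 hk.2
    simp only [toExp, dif_pos hk] at this
    exact Fin.ext this
  have := finite_XIcc hp hcard n m
  have hcard_dom : Nat.card (Set.Icc n m → Fin p) = Nat.card (XIcc x n m) := by
    rw [Nat.card_fun, card_XIcc hcard]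
    simp [add_sub_right_comm]
  obtain ⟨φ, hφ⟩ := ((Nat.bijective_iff_injective_and_card f).mpr ⟨hinj, hcard_dom⟩).2 ⟨g, hg⟩
  exact ⟨toExp φ, hlt φ, congrArg Subtype.val hφ⟩

theorem exists_isNormalForm_of_mem {a b : ℤ} {g : X} (hg : g ∈ XIcc x a b) (hg1 : g ≠ 1) :
    ∃ n m e, IsNormalForm p x g n m e ∧ a ≤ n ∧ m ≤ b := by
  obtain ⟨e, he, rfl⟩ := exists_prodForm_eq hp hcard hg
  set S := (Finset.Icc a b).filter (e · ≠ 0)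
  have mem_S {k : ℤ} (hak : a ≤ k) (hkb : k ≤ b) (hk : e k ≠ 0) : k ∈ S :=
    Finset.mem_filter.mpr ⟨Finset.mem_Icc.mpr ⟨hak, hkb⟩, hk⟩
  have hS : S.Nonempty := by
    by_contra hS
    exact hg1 (prodForm_eq_one fun k hak hkb => by_contra fun hk => hS ⟨k, mem_S hak hkb hk⟩)
  have hmin := Finset.mem_filter.mp (S.min'_mem hS)
  have hmax := Finset.mem_filter.mp (S.max'_mem hS)
  rw [Finset.mem_Icc] at hmin hmax
  refine ⟨S.min' hS, S.max' hS, e, ⟨S.min'_le _ (S.max'_mem hS), he, hmin.2, hmax.2, ?_⟩,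
    hmin.1.1, hmax.1.2⟩
  refine prodForm_trim hmin.1.1 hmax.1.2 (fun k hak hk => ?_) (fun k hk hkb => ?_)
  · exact by_contra fun h => (S.min'_le k (mem_S hak (by omega) h)).not_gt hk
  · exact by_contra fun h => (S.le_max' k (mem_S (by omega) hkb h)).not_gt hk

theorem IsNormalForm.unique {g : X} {n m n' m' : ℤ} {e e' : ℤ → ℕ}
    (h : IsNormalForm p x g n m e) (h' : IsNormalForm p x g n' m' e') :
    n = n' ∧ m = m' ∧ ∀ k, n ≤ k → k ≤ m → e k = e' k := by
  obtain ⟨hnm, he, hen, hem, rfl⟩ := h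
  obtain ⟨hnm', he', hen', hem', hg⟩ := h'
  have hwindow := eq_of_prodForm_eq hp hcard (n := min n n') (m := max m m')
    (fun k => (Set.indicator_le_self _ e k).trans_lt (he k))
    (fun k => (Set.indicator_le_self _ e' k).trans_lt (he' k))
    (by rw [prodForm_indicator (min_le_left ..) (le_max_left ..),
      prodForm_indicator (min_le_right ..) (le_max_right ..), hg])
  have hind : (Set.Icc n m).indicator e = (Set.Icc n' m').indicator e' := by
    funext k
    by_cases hk : min n n' ≤ k ∧ k ≤ max m m'
    · exact hwindow k hk.1 hk.2
    · rw [Set.indicator_of_notMem, Set.indicator_of_notMem] <;> simp only [Set.mem_Icc] <;> omega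
  have hsupp {k} (hk : (Set.Icc n m).indicator e k ≠ 0) : k ∈ Set.Icc n' m' :=
    Set.mem_of_indicator_ne_zero (hind ▸ hk)
  have hsupp' {k} (hk : (Set.Icc n' m').indicator e' k ≠ 0) : k ∈ Set.Icc n m :=
    Set.mem_of_indicator_ne_zero (hind ▸ hk)
  have h1 := hsupp (k := n) (by rwa [Set.indicator_of_mem (Set.mem_Icc.mpr ⟨le_rfl, hnm⟩)])
  have h2 := hsupp (k := m) (by rwa [Set.indicator_of_mem (Set.mem_Icc.mpr ⟨hnm, le_rfl⟩)])
  have h3 := hsupp' (k := n') (by rwa [Set.indicator_of_mem (Set.mem_Icc.mpr ⟨le_rfl, hnm'⟩)])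
  have h4 := hsupp' (k := m') (by rwa [Set.indicator_of_mem (Set.mem_Icc.mpr ⟨hnm', le_rfl⟩)])
  simp only [Set.mem_Icc] at h1 h2 h3 h4
  refine ⟨by omega, by omega, fun k hnk hkm => ?_⟩
  simpa [Set.indicator_of_mem, hnk, hkm, show n' ≤ k by omega, show k ≤ m' by omega]
    using congrFun hind k

theorem XIcc_inf_XIcc_le (a b c d : ℤ) :
    XIcc x a b ⊓ XIcc x c d ≤ XIcc x (max a c) (min b d) := by
  rintro g ⟨hg, hg'⟩
  by_cases hg1 : g = 1
  · exact hg1 ▸ one_mem _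
  obtain ⟨n, m, e, h, han, hmb⟩ := exists_isNormalForm_of_mem hp hcard hg hg1
  obtain ⟨n', m', e', h', hcn, hmd⟩ := exists_isNormalForm_of_mem hp hcard hg' hg1
  obtain ⟨rfl, rfl, -⟩ := IsNormalForm.unique hp hcard h h'
  exact h.2.2.2.2 ▸ XIcc_mono (by omega) (by omega) (prodForm_mem n m e)

theorem commutatorElement_mem_XIcc {n m : ℤ} (h : n < m) :
    ⁅x n, x m⁆ ∈ XIcc x (n + 1) (m - 1) := by
  have hcard_nm : Nat.card (XIcc x n m) = p ^ ((m - n).toNat + 1) := by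
    rw [hcard n m h.le]; congr 1; omega
  have hL : XIcc x n m ≤ Subgroup.normalizer (XIcc x (n + 1) m) :=
    Subgroup.le_normalizer_of_card_eq_prime_pow_succ hp (XIcc_mono (by omega) le_rfl) hcard_nm
      (by rw [hcard _ _ (by omega)]; congr 1; omega)
  have hR : XIcc x n m ≤ Subgroup.normalizer (XIcc x n (m - 1)) :=
    Subgroup.le_normalizer_of_card_eq_prime_pow_succ hp (XIcc_mono le_rfl (by omega)) hcard_nm
      (by rw [hcard _ _ (by omega)]; congr 1; omega)
  have hmemL : ⁅x n, x m⁆ ∈ XIcc x (n + 1) m := by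
    rw [commutatorElement_def]
    refine mul_mem ?_ (inv_mem (mem_XIcc (by omega) le_rfl))
    exact (Subgroup.mem_normalizer_iff.mp (hL (mem_XIcc le_rfl h.le)) _).mp
      (mem_XIcc (by omega) le_rfl)
  have hmemR : ⁅x n, x m⁆ ∈ XIcc x n (m - 1) := by
    rw [commutatorElement_def, mul_assoc, mul_assoc, ← mul_assoc (x m)]
    refine mul_mem (mem_XIcc le_rfl (by omega)) ?_
    exact (Subgroup.mem_normalizer_iff.mp (hR (mem_XIcc h.le le_rfl)) _).mp
      (inv_mem (mem_XIcc le_rfl (by omega)))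
  have := XIcc_inf_XIcc_le hp hcard _ _ _ _ ⟨hmemL, hmemR⟩
  rwa [max_eq_left (by omega), min_eq_right (by omega)] at this

end

end ZSystem

open ZSystem

/-- Basic properties of a ℤ-system of prime order: (i) each `x n` has order `p`;
(ii) `[x n, x m] ∈ X_{n+1,m-1}` for `n < m`; (iii) every nontrivial element has a
unique normal form `x_n^{e_n} ⋯ x_m^{e_m}` with `e_n ≠ 0 ≠ e_m`. -/
theorem zsystem_basic_properties (p : ℕ) (hp : p.Prime) {X : Type*} [Group X]
    (x : ℤ → X) (hX : IsZSystem p x) :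
    (∀ n : ℤ, x n ^ p = 1 ∧ x n ≠ 1) ∧
    (∀ n m : ℤ, n < m → ⁅x n, x m⁆ ∈ XIcc x (n + 1) (m - 1)) ∧
    (∀ g : X, g ≠ 1 →
      (∃ n m : ℤ, ∃ e : ℤ → ℕ, IsNormalForm p x g n m e) ∧
      (∀ n m n' m' : ℤ, ∀ e e' : ℤ → ℕ,
        IsNormalForm p x g n m e → IsNormalForm p x g n' m' e' →
        n = n' ∧ m = m' ∧ ∀ k : ℤ, n ≤ k → k ≤ m → e k = e' k)) := by
  have hcard := hX.card_Icc
  refine ⟨fun n => ⟨?_, ?_⟩, fun n m h => commutatorElement_mem_XIcc hp hcard h, fun g hg => ⟨?_,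
    fun n m n' m' e e' h h' => IsNormalForm.unique hp hcard h h'⟩⟩
  · rw [← orderOf_eq hcard n]
    exact pow_orderOf_eq_one _
  · rw [Ne, ← orderOf_eq_one_iff, orderOf_eq hcard]
    exact hp.ne_one
  · obtain ⟨a, b, hab⟩ := exists_mem_XIcc hX.closure_range g
    obtain ⟨n, m, e, h, -⟩ := exists_isNormalForm_of_mem hp hcard hab hg
    exact ⟨n, m, e, h⟩
end

section
/- Let p be a prime, let (X,(x_n)_{n∈ℤ}) be a ℤ-system of order p, suppose X is non-abelian, and let n := min{|m'-n'| : n',m' ∈ ℤ, [x_{n'},x_{m'}] ≠ 1} (the lower cutoff). Then: if [x_0,x_n] ≠ 1 then [x_1,x_{n+1}] = 1, and if [x_1,x_{n+1}] ≠ 1 then [x_0,x_n] = 1. -/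
open scoped commutatorElement

/-!
Suppose both `[x 0, x N]` and `[x 1, x (N + 1)]` are nontrivial. Shifting by the automorphism `t`
gives `[x n, x (n + N)] ≠ 1` for every `n`, while generators at distance `< N` commute. In a group
of order `p ^ k` a subgroup of index `p` contains every commutator, and `X_{n+1,m}`, `X_{n,m-1}`
have index `p` in `X_{n,m}`. So `c := [x 0, x N]` lies in `X_{1,N}`, and inductively in
`X_{K,N}` for `K ≤ N`: the subgroup `⟨c⟩ X_{K+1,N}` lies between `X_{K+1,N}` and `X_{K,N}`, and it
cannot be all of `X_{K,N}` because it centralizes `x (K + N)` while `x K` does not (`c` is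
centralized by every `x j` with `N < j < 2N`). Hence `c` generates `X_{N,N}`, which has order `p`;
but `c` also lies in `X_{0,N-1}`, so `x N ∈ X_{0,N-1}`, contradicting `|X_{0,N}| = p |X_{0,N-1}|`.
-/

section GroupTheory

variable {G : Type*} [Group G] {p : ℕ}

namespace Subgroup

theorem eq_or_eq_of_le_of_le_of_relIndex_eq_prime (hp : p.Prime) {B W H : Subgroup G}
    (hBW : B ≤ W) (hWH : W ≤ H) (hBH : B.relIndex H = p) : W = B ∨ W = H := by
  have hmul := relIndex_mul_relIndex B W H hBW hWH
  rw [hBH] at hmul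
  rcases Nat.prime_mul_iff.mp (hmul ▸ hp) with ⟨-, h⟩ | ⟨-, h⟩
  · exact Or.inr (le_antisymm hWH (relIndex_eq_one.mp h))
  · exact Or.inl (le_antisymm (relIndex_eq_one.mp h) hBW)

theorem relIndex_eq_of_card_eq_pow_succ (hp : p ≠ 0) {B H : Subgroup G} (hBH : B ≤ H) {k : ℕ}
    (hB : Nat.card B = p ^ k) (hH : Nat.card H = p ^ (k + 1)) : B.relIndex H = p := by
  have hmul := relIndex_mul_relIndex ⊥ B H bot_le hBH
  rw [relIndex_bot_left, relIndex_bot_left, hB, hH, pow_succ] at hmul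
  exact Nat.eq_of_mul_eq_mul_left (pow_pos (Nat.pos_of_ne_zero hp) k) hmul

theorem commutatorElement_mem_of_relIndex_eq_prime (hp : p.Prime) {B H : Subgroup G} {k : ℕ}
    (hH : Nat.card H = p ^ k) (hB : B.relIndex H = p) {a b : G} (ha : a ∈ H) (hb : b ∈ H) :
    ⁅a, b⁆ ∈ B := by
  set B' := B.subgroupOf H
  have hindex : B'.index = p := hB
  have hk : k ≠ 0 := by
    rintro rfl
    have := hindex ▸ B'.index_dvd_card
    rw [hH, pow_zero] at this
    exact hp.one_lt.ne' (Nat.dvd_one.mp this)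
  have : B'.Normal := normal_of_index_eq_minFac_card (by rw [hindex, hH, hp.pow_minFac hk])
  have : IsCyclic (H ⧸ B') :=
    isCyclic_of_prime_card (hp := ⟨hp⟩) (by rw [← index_eq_card, hindex])
  let : CommGroup (H ⧸ B') := IsCyclic.commGroup
  have hquot : QuotientGroup.mk' B' ⁅(⟨a, ha⟩ : H), ⟨b, hb⟩⁆ = 1 := by
    rw [map_commutatorElement, commutatorElement_eq_one_iff_commute]
    exact Commute.all _ _
  simpa [B', mem_subgroupOf, commutatorElement_def] using (QuotientGroup.eq_one_iff _).mp hquot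

end Subgroup

theorem commute_commutatorElement_of_commute {a b g : G} (hgb : Commute g b)
    (hm : Commute ⁅a⁻¹, g⁆ b) : Commute g ⁅a, b⁆ := by
  set m := ⁅a⁻¹, g⁆ with hm_def
  rw [commutatorElement_def, inv_inv] at hm_def
  calc g * ⁅a, b⁆ = a * m * (g * b) * a⁻¹ * b⁻¹ := by rw [hm_def, commutatorElement_def]; group
    _ = a * (m * b) * g * a⁻¹ * b⁻¹ := by rw [hgb.eq]; group
    _ = a * b * a⁻¹ * (g * b⁻¹) := by rw [hm.eq, hm_def]; group
    _ = ⁅a, b⁆ * g := by rw [hgb.inv_right.eq, commutatorElement_def]; group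

end GroupTheory

section XIcc

variable {X : Type*} [Group X] {x : ℤ → X} {n m : ℤ}

theorem mem_XIcc {k : ℤ} (hn : n ≤ k) (hm : k ≤ m) : x k ∈ XIcc x n m :=
  Subgroup.subset_closure ⟨k, ⟨hn, hm⟩, rfl⟩

theorem XIcc_mono {n' m' : ℤ} (hn : n' ≤ n) (hm : m ≤ m') : XIcc x n m ≤ XIcc x n' m' :=
  Subgroup.closure_mono (Set.image_mono (Set.Icc_subset_Icc hn hm))

theorem XIcc_le_centralizer {g : X} (h : ∀ i ∈ Set.Icc n m, Commute (x i) g) :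
    XIcc x n m ≤ Subgroup.centralizer {g} :=
  (Subgroup.closure_le _).mpr <| by
    rintro _ ⟨i, hi, rfl⟩
    exact Subgroup.mem_centralizer_singleton_iff.mpr (h i hi)

end XIcc

namespace IsZSystem

variable {p : ℕ} {X : Type*} [Group X] {x : ℤ → X} {n m : ℤ}

theorem relIndex_XIcc_add_one_left (hX : IsZSystem p x) (hp : p.Prime) (hnm : n < m) :
    (XIcc x (n + 1) m).relIndex (XIcc x n m) = p :=
  Subgroup.relIndex_eq_of_card_eq_pow_succ hp.ne_zero (XIcc_mono (by omega) le_rfl)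
    (hX.card_Icc _ _ (by omega)) (by rw [hX.card_Icc _ _ hnm.le]; congr 1; omega)

theorem relIndex_XIcc_sub_one_right (hX : IsZSystem p x) (hp : p.Prime) (hnm : n < m) :
    (XIcc x n (m - 1)).relIndex (XIcc x n m) = p :=
  Subgroup.relIndex_eq_of_card_eq_pow_succ hp.ne_zero (XIcc_mono le_rfl (by omega))
    (hX.card_Icc _ _ (by omega)) (by rw [hX.card_Icc _ _ hnm.le]; congr 1; omega)

theorem commutatorElement_mem_XIcc_add_one_left (hX : IsZSystem p x) (hp : p.Prime) (hnm : n < m)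
    {a b : X} (ha : a ∈ XIcc x n m) (hb : b ∈ XIcc x n m) : ⁅a, b⁆ ∈ XIcc x (n + 1) m :=
  Subgroup.commutatorElement_mem_of_relIndex_eq_prime hp (hX.card_Icc n m hnm.le)
    (hX.relIndex_XIcc_add_one_left hp hnm) ha hb

theorem commutatorElement_mem_XIcc_sub_one_right (hX : IsZSystem p x) (hp : p.Prime)
    (hnm : n < m) {a b : X} (ha : a ∈ XIcc x n m) (hb : b ∈ XIcc x n m) :
    ⁅a, b⁆ ∈ XIcc x n (m - 1) :=
  Subgroup.commutatorElement_mem_of_relIndex_eq_prime hp (hX.card_Icc n m hnm.le)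
    (hX.relIndex_XIcc_sub_one_right hp hnm) ha hb

theorem x_notMem_XIcc_sub_one (hX : IsZSystem p x) (hp : p.Prime) (hnm : n < m) :
    x m ∉ XIcc x n (m - 1) := by
  intro hm
  have hle : XIcc x n m ≤ XIcc x n (m - 1) := (Subgroup.closure_le _).mpr <| by
    rintro _ ⟨i, hi, rfl⟩
    rcases hi.2.eq_or_lt with rfl | hlt
    · exact hm
    · exact mem_XIcc hi.1 (by omega)
  have h1 := Subgroup.relIndex_eq_one.mpr hle
  rw [hX.relIndex_XIcc_sub_one_right hp hnm] at h1
  exact hp.one_lt.ne' h1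

theorem commute_add_two_mul_iff (hX : IsZSystem p x) (k : ℤ) :
    Commute (x (n + 2 * k)) (x (m + 2 * k)) ↔ Commute (x n) (x m) := by
  obtain ⟨t, ht⟩ := hX.exists_shift
  have hpow : ∀ k : ℤ, ∀ n, (t ^ k) (x n) = x (n + 2 * k) := by
    intro k
    induction k using Int.induction_on with
    | zero => simp
    | succ k ih => intro n; rw [zpow_add_one, MulAut.mul_apply, ht, ih]; ring_nf
    | pred k ih =>
      intro n
      rw [zpow_sub_one, MulAut.mul_apply, MulAut.inv_apply, t.symm_apply_eq.mpr
        (by rw [ht, sub_add_cancel] : x n = t (x (n - 2))), ih]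
      ring_nf
  rw [← hpow, ← hpow]
  exact commute_map_iff (t ^ k).injective

theorem commute_x_commutatorElement (hX : IsZSystem p x) (hp : p.Prime) {N : ℕ}
    (hshort : ∀ a b : ℤ, (b - a).natAbs < N → Commute (x a) (x b)) {j : ℤ} (hj : N < j)
    (hj' : j < 2 * N) : Commute (x j) ⁅x 0, x N⁆ := by
  refine commute_commutatorElement_of_commute (hshort _ _ (by omega)) ?_
  have hm : ⁅(x 0)⁻¹, x j⁆ ∈ XIcc x (0 + 1) j :=
    hX.commutatorElement_mem_XIcc_add_one_left hp (by omega)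
      (inv_mem (mem_XIcc le_rfl (by omega))) (mem_XIcc (by omega) le_rfl)
  exact Subgroup.mem_centralizer_singleton_iff.mp <|
    XIcc_le_centralizer (fun i hi => hshort _ _ (by simp only [Set.mem_Icc] at hi; omega)) hm

theorem commutatorElement_x_mem_XIcc_add_one (hX : IsZSystem p x) (hp : p.Prime) {N : ℕ}
    (hshort : ∀ a b : ℤ, (b - a).natAbs < N → Commute (x a) (x b))
    (hcut : ∀ n, ¬Commute (x n) (x (n + N))) {K : ℤ} (hK : 1 ≤ K) (hKN : K < N)
    (hc : ⁅x 0, x N⁆ ∈ XIcc x K N) : ⁅x 0, x N⁆ ∈ XIcc x (K + 1) N := by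
  have hle : Subgroup.zpowers ⁅x 0, x N⁆ ⊔ XIcc x (K + 1) N ≤ XIcc x K N :=
    sup_le (Subgroup.zpowers_le.mpr hc) (XIcc_mono (by omega) le_rfl)
  rcases Subgroup.eq_or_eq_of_le_of_le_of_relIndex_eq_prime hp le_sup_right hle
    (hX.relIndex_XIcc_add_one_left hp hKN) with hW | hW
  · exact hW ▸ Subgroup.mem_sup_left (Subgroup.mem_zpowers _)
  · refine absurd ?_ (hcut K)
    have hcent : Subgroup.zpowers ⁅x 0, x N⁆ ⊔ XIcc x (K + 1) N ≤
        Subgroup.centralizer {x (K + N)} := by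
      refine sup_le (Subgroup.zpowers_le.mpr ?_) ?_
      · exact Subgroup.mem_centralizer_singleton_iff.mpr
          (hX.commute_x_commutatorElement hp hshort (j := K + N) (by omega) (by omega)).symm
      · exact XIcc_le_centralizer (fun i hi => hshort _ _ (by simp only [Set.mem_Icc] at hi; omega))
    exact Subgroup.mem_centralizer_singleton_iff.mp (hcent (hW ▸ mem_XIcc le_rfl hKN.le))

theorem commutatorElement_x_mem_XIcc_self (hX : IsZSystem p x) (hp : p.Prime) {N : ℕ}
    (hN : 0 < N) (hshort : ∀ a b : ℤ, (b - a).natAbs < N → Commute (x a) (x b))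
    (hcut : ∀ n, ¬Commute (x n) (x (n + N))) : ⁅x 0, x N⁆ ∈ XIcc x N N := by
  have hmem : ∀ K : ℤ, 1 ≤ K → K ≤ N → ⁅x 0, x N⁆ ∈ XIcc x K N := by
    intro K hK
    induction K, hK using Int.leInduction with
    | base =>
      intro _
      exact hX.commutatorElement_mem_XIcc_add_one_left hp (n := 0) (by omega)
        (mem_XIcc le_rfl (by omega)) (mem_XIcc (by omega) le_rfl)
    | succ K hK ih =>
      intro hKN
      exact hX.commutatorElement_x_mem_XIcc_add_one hp hshort hcut hK (by omega) (ih (by omega))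
  exact hmem N (by omega) le_rfl

theorem exists_commute_add (hX : IsZSystem p x) (hp : p.Prime) {N : ℕ} (hN : 0 < N)
    (hshort : ∀ a b : ℤ, (b - a).natAbs < N → Commute (x a) (x b)) :
    ∃ n, Commute (x n) (x (n + N)) := by
  by_contra! hcut
  set c := ⁅x 0, x N⁆
  have hc : c ≠ 1 := by simpa [c, commutatorElement_eq_one_iff_commute] using hcut 0
  have hcN : Subgroup.zpowers c ≤ XIcc x N N :=
    Subgroup.zpowers_le.mpr (hX.commutatorElement_x_mem_XIcc_self hp hN hshort hcut)
  have hpN : (⊥ : Subgroup X).relIndex (XIcc x N N) = p := by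
    rw [Subgroup.relIndex_bot_left, hX.card_Icc _ _ le_rfl, sub_self, zero_add]; simp
  rcases Subgroup.eq_or_eq_of_le_of_le_of_relIndex_eq_prime hp bot_le hcN hpN with h | h
  · exact hc (Subgroup.zpowers_eq_bot.mp h)
  · refine hX.x_notMem_XIcc_sub_one hp (n := 0) (m := N) (by omega) ?_
    have hc' : c ∈ XIcc x 0 (N - 1) := hX.commutatorElement_mem_XIcc_sub_one_right hp (by omega)
      (mem_XIcc le_rfl (by omega)) (mem_XIcc (by omega) le_rfl)
    exact Subgroup.zpowers_le.mpr hc' (h.symm ▸ mem_XIcc le_rfl le_rfl)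

end IsZSystem

theorem zsystem_lower_cutoff_alternative_general (p : ℕ) (hp : p.Prime) {X : Type*} [Group X]
    (x : ℤ → X) (hX : IsZSystem p x)
    (N : ℕ)
    (hN : IsLeast {d : ℕ | ∃ n' m' : ℤ, ⁅x n', x m'⁆ ≠ 1 ∧ d = (m' - n').natAbs} N) :
    (⁅x 0, x (N : ℤ)⁆ ≠ 1 → ⁅x 1, x ((N : ℤ) + 1)⁆ = 1) ∧
    (⁅x 1, x ((N : ℤ) + 1)⁆ ≠ 1 → ⁅x 0, x (N : ℤ)⁆ = 1) := by
  have hshort : ∀ a b : ℤ, (b - a).natAbs < N → Commute (x a) (x b) := fun a b hab => by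
    by_contra h
    exact (hN.2 ⟨a, b, mt commutatorElement_eq_one_iff_commute.mp h, rfl⟩).not_gt hab
  suffices Commute (x 0) (x N) ∨ Commute (x 1) (x (N + 1)) by
    simp only [ne_eq, commutatorElement_eq_one_iff_commute]
    tauto
  rcases N.eq_zero_or_pos with rfl | hN0
  · exact .inl (by simp)
  obtain ⟨n, hn⟩ := hX.exists_commute_add hp hN0 hshort
  obtain ⟨k, rfl | rfl⟩ := Int.even_or_odd' n
  · exact .inl ((hX.commute_add_two_mul_iff k).mp (by convert hn using 2 <;> ring))
  · exact .inr ((hX.commute_add_two_mul_iff k).mp (by convert hn using 2 <;> ring))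

/-- Let `X` be a non-abelian ℤ-system of prime order and let `N` be its lower cutoff,
i.e. the least element of `{|m'-n'| : [x_{n'}, x_{m'}] ≠ 1}`. If `[x 0, x N] ≠ 1` then
`[x 1, x (N+1)] = 1`, and if `[x 1, x (N+1)] ≠ 1` then `[x 0, x N] = 1`. -/
theorem zsystem_lower_cutoff_alternative (p : ℕ) (hp : p.Prime) {X : Type*} [Group X]
    (x : ℤ → X) (hX : IsZSystem p x)
    (hna : ∃ a b : X, a * b ≠ b * a)
    (N : ℕ)
    (hN : IsLeast {d : ℕ | ∃ n' m' : ℤ, ⁅x n', x m'⁆ ≠ 1 ∧ d = (m' - n').natAbs} N) :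
    (⁅x 0, x (N : ℤ)⁆ ≠ 1 → ⁅x 1, x ((N : ℤ) + 1)⁆ = 1) ∧
    (⁅x 1, x ((N : ℤ) + 1)⁆ ≠ 1 → ⁅x 0, x (N : ℤ)⁆ = 1) :=
  zsystem_lower_cutoff_alternative_general p hp x hX N hN
end

section
/- Let G be a locally nilpotent group (i.e. every finitely generated subgroup of G is nilpotent) and let A ≤ G be a finitely generated subgroup. Then A is contained in the normal closure ⟨[A,G]⟩^G of the commutator subgroup [A,G] if and only if A is trivial. -/
/-!
In a nilpotent group the conclusion is immediate: the normal closure `C` of `A` satisfies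
`C ≤ [C, G]`, so `C` lies in every term of the lower central series and is trivial.
For a locally nilpotent `G`, each generator of `A` is a product of finitely many conjugates
`g [a, h] g⁻¹`; adjoining the finitely many `g`, `h` involved to `A` gives a finitely generated,
hence nilpotent, subgroup `H` in which `A ≤ ⟨[A, H]⟩^H` already holds.
-/

open Subgroup
open scoped commutatorElement

namespace Subgroup

variable {G : Type*} [Group G]

theorem normalClosure_commutator_top_le (B : Subgroup G) :
    normalClosure ((⁅B, ⊤⁆ : Subgroup G) : Set G) ≤ ⁅normalClosure (B : Set G), ⊤⁆ :=
  normalClosure_le_normal (commutator_mono le_normalClosure le_rfl)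

theorem le_lowerCentralSeries_of_le_commutator_top {N : Subgroup G} (h : N ≤ ⁅N, ⊤⁆) :
    ∀ n, N ≤ (⊤ : Subgroup G).lowerCentralSeries n
  | 0 => le_top
  | n + 1 => h.trans (commutator_mono (le_lowerCentralSeries_of_le_commutator_top h n) le_rfl)

theorem eq_bot_of_le_commutator_top [Group.IsNilpotent G] {N : Subgroup G} (h : N ≤ ⁅N, ⊤⁆) :
    N = ⊥ := by
  obtain ⟨n, hn⟩ := nilpotent_iff_lowerCentralSeries.mp ‹Group.IsNilpotent G›
  exact le_bot_iff.mp (hn ▸ le_lowerCentralSeries_of_le_commutator_top h n)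

theorem eq_bot_of_le_normalClosure_commutator_top [Group.IsNilpotent G] {B : Subgroup G}
    (h : B ≤ normalClosure ((⁅B, ⊤⁆ : Subgroup G) : Set G)) : B = ⊥ := by
  have hC : normalClosure (B : Set G) ≤ ⁅normalClosure (B : Set G), ⊤⁆ :=
    normalClosure_le_normal fun _ hb => normalClosure_commutator_top_le B (h hb)
  exact le_bot_iff.mp (eq_bot_of_le_commutator_top hC ▸ le_normalClosure)

theorem FG.exists_le_of_forall_mem {ι : Type*} [SemilatticeSup ι] [OrderBot ι]
    {K : ι → Subgroup G} (hK : Monotone K) {B : Subgroup G} (hB : B.FG)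
    (h : ∀ x ∈ B, ∃ i, x ∈ K i) : ∃ i, B ≤ K i := by
  obtain ⟨S, rfl⟩ := hB
  choose i hi using fun (s : S) => h s (subset_closure s.2)
  refine ⟨S.attach.sup i, (closure_le _).mpr fun s hs => ?_⟩
  exact hK (Finset.le_sup (f := i) (Finset.mem_attach S ⟨s, hs⟩)) (hi ⟨s, hs⟩)

def conjCommutatorClosure (A : Subgroup G) (F : Finset G) : Subgroup G :=
  closure {x | ∃ g ∈ F, ∃ a ∈ A, ∃ h ∈ F, g * ⁅a, h⁆ * g⁻¹ = x}

theorem conjCommutatorClosure_mono (A : Subgroup G) : Monotone (conjCommutatorClosure A) :=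
  fun _ _ hF => closure_mono fun _ ⟨g, hg, a, ha, h, hh, hx⟩ => ⟨g, hF hg, a, ha, h, hF hh, hx⟩

theorem exists_mem_conjCommutatorClosure {A : Subgroup G} {x : G}
    (hx : x ∈ normalClosure ((⁅A, ⊤⁆ : Subgroup G) : Set G)) :
    ∃ F, x ∈ conjCommutatorClosure A F := by
  classical
  refine (mem_iSup_of_directed (conjCommutatorClosure_mono A).directed_le).mp ?_
  rw [commutator_def, normalClosure_closure_eq_normalClosure] at hx
  refine (closure_le _).mpr ?_ hx
  rintro _ hx
  obtain ⟨_, ⟨a, ha, h, -, rfl⟩, hconj⟩ := Group.mem_conjugatesOfSet_iff.mp hx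
  obtain ⟨g, rfl⟩ := isConj_iff.mp hconj
  exact le_iSup (conjCommutatorClosure A) {g, h}
    (subset_closure ⟨g, by simp, a, ha, h, by simp, rfl⟩)

theorem conjCommutatorClosure_le_map_normalClosure {A H : Subgroup G} {F : Finset G}
    (hA : A ≤ H) (hF : (F : Set G) ⊆ H) :
    conjCommutatorClosure A F ≤
      (normalClosure ((⁅A.subgroupOf H, ⊤⁆ : Subgroup H) : Set H)).map H.subtype := by
  refine (closure_le _).mpr ?_
  rintro _ ⟨g, hg, a, ha, h, hh, rfl⟩
  let g' : H := ⟨g, hF hg⟩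
  have hcomm : ⁅(⟨a, hA ha⟩ : H), (⟨h, hF hh⟩ : H)⁆ ∈ ⁅A.subgroupOf H, ⊤⁆ :=
    commutator_mem_commutator (mem_subgroupOf.mpr ha) (mem_top _)
  exact ⟨_, normalClosure_normal.conj_mem _ (subset_normalClosure hcomm) g', rfl⟩

end Subgroup

/-- In a locally nilpotent group `G`, a finitely generated subgroup `A` is contained in
the normal closure of `[A,G]` if and only if `A` is trivial. -/
theorem fg_subgroup_le_normalClosure_commutator_iff {G : Type*} [Group G]
    (hln : ∀ H : Subgroup G, H.FG → Group.IsNilpotent H)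
    (A : Subgroup G) (hA : A.FG) :
    A ≤ Subgroup.normalClosure ((⁅A, (⊤ : Subgroup G)⁆ : Subgroup G) : Set G) ↔ A = ⊥ := by
  classical
  refine ⟨fun hle => ?_, fun h => h ▸ bot_le⟩
  obtain ⟨F, hAF⟩ := hA.exists_le_of_forall_mem (conjCommutatorClosure_mono A)
    fun _ hx => exists_mem_conjCommutatorClosure (hle hx)
  set H := A ⊔ closure (F : Set G)
  have := hln H (hA.sup ⟨F, rfl⟩)
  have hAH : A ≤ H := le_sup_left
  have hlocal : A.subgroupOf H ≤ normalClosure ((⁅A.subgroupOf H, ⊤⁆ : Subgroup H) : Set H) := by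
    rw [← map_le_map_iff_of_injective H.subtype_injective, map_subgroupOf_eq_of_le hAH]
    exact hAF.trans <| conjCommutatorClosure_le_map_normalClosure hAH
      fun _ hx => mem_sup_right (Subgroup.subset_closure hx)
  rw [← map_subgroupOf_eq_of_le hAH, eq_bot_of_le_normalClosure_commutator_top hlocal,
    Subgroup.map_bot]
end

section
/- Let p be a prime, let (X,(x_n)_{n∈ℤ}) be a ℤ-system of order p with shift automorphism t, and let Y ≤ X be a shift-invariant subgroup. Then: (i) if Y_{n-1,∞} ≤ ⟨Y_{n,∞}⟩^X for all n ∈ ℤ, then there is M ∈ ℕ with Y_{-∞,M} ≤ ⟨Y_{0,M}⟩^X; (ii) if Y_{-∞,n+1} ≤ ⟨Y_{-∞,n}⟩^X for all n ∈ ℤ, then there is M ∈ ℕ with Y_{0,∞} ≤ ⟨Y_{0,M}⟩^X. -/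
/-!
Part (ii) is part (i) for the reflected system `k ↦ x (-k)` with shift `t⁻¹`, and for part (i)
it suffices to find `M` with `Y_{-∞,0} ≤ ⟨Y_{-M,0}⟩^X`, which is then moved by a power of `t`.

Since `X_{1-n,0}` has index `p` in the `p`-group `X_{-n,0}`, either `Y_{-n,0} = Y_{1-n,0}`, or
`Y_{-n,0}` is generated by `Y_{1-n,0}` and any single `w ∈ Y_{-n,0} \ X_{1-n,0}`. Iterating the
hypothesis, such a `w` lies in `⟨Y_{1,m}⟩^X` for some `m`. Fix one such `w` for each parity of `n`;
its translates under powers of `t` (which preserve `Y` and shift indices by `2`) provide the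
missing generator at every larger level `n` of that parity, and for `n` large they lie in
`⟨Y_{1-n,0}⟩^X`. Induction on `n` then gives `Y_{-n,0} ≤ ⟨Y_{-M,0}⟩^X` for all `n`.
-/

open Subgroup
open scoped Pointwise

namespace Subgroup

variable {G : Type*} [Group G]

theorem card_mul_relIndex {K L : Subgroup G} (h : K ≤ L) :
    Nat.card K * K.relIndex L = Nat.card L := by
  simpa only [relIndex_bot_left] using relIndex_mul_relIndex _ _ _ bot_le h

theorem eq_or_eq_of_relIndex_prime {H K L : Subgroup G} (hHK : H ≤ K) (hKL : K ≤ L)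
    (hp : (H.relIndex L).Prime) : K = H ∨ K = L := by
  rw [← relIndex_mul_relIndex _ _ _ hHK hKL, Nat.prime_mul_iff] at hp
  rcases hp with ⟨-, h⟩ | ⟨-, h⟩
  · exact Or.inr (le_antisymm hKL (relIndex_eq_one.mp h))
  · exact Or.inl (le_antisymm (relIndex_eq_one.mp h) hHK)

theorem le_closure_insert_of_relIndex_prime {A B : Subgroup G} (hp : (B.relIndex A).Prime)
    {w : G} (hwA : w ∈ A) (hwB : w ∉ B) :
    A ≤ closure (insert w ((A ⊓ B : Subgroup G) : Set G)) := by
  set D := closure (insert w ((A ⊓ B : Subgroup G) : Set G))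
  have hwD : w ∈ D := subset_closure (Set.mem_insert _ _)
  have hD : A ⊓ B ≤ D := (Set.subset_insert _ _).trans subset_closure
  have hDA : D ≤ A := (closure_le A).mpr (Set.insert_subset hwA inf_le_left)
  rw [← inf_relIndex_left] at hp
  rcases eq_or_eq_of_relIndex_prime hD hDA hp with h | h
  · exact absurd (h ▸ hwD : w ∈ A ⊓ B).2 hwB
  · exact h.ge

theorem relIndex_eq_of_le_of_not_le {p k : ℕ} (hp : p.Prime) {A B C : Subgroup G}
    (hAC : A ≤ C) (hC : Nat.card C = p ^ k) (hBC : B.relIndex C = p) (hAB : ¬A ≤ B) :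
    B.relIndex A = p := by
  obtain ⟨j, -, hj⟩ := (Nat.dvd_prime_pow hp).mp
    (hC ▸ (relIndex_dvd_card B A).trans (card_dvd_of_le hAC))
  have hle : B.relIndex A ≤ p := hBC ▸ relIndex_le_of_le_right hAC (hBC ▸ hp.ne_zero)
  have hne : B.relIndex A ≠ 1 := fun h => hAB (relIndex_eq_one.mp h)
  rw [hj] at hle hne ⊢
  have : j ≤ 1 := (Nat.pow_le_pow_iff_right hp.one_lt).mp (by rwa [pow_one])
  interval_cases j <;> simp_all

theorem exists_mem_normalClosure_of_monotone {s : ℕ → Set G} (hs : Monotone s) {g : G}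
    (hg : g ∈ normalClosure (⋃ n, s n)) : ∃ n, g ∈ normalClosure (s n) := by
  have hdir : Directed (· ≤ ·) fun n => normalClosure (s n) :=
    Monotone.directed_le fun _ _ h => normalClosure_mono (hs h)
  refine (mem_iSup_of_directed hdir).mp (normalClosure_le_normal ?_ hg)
  exact Set.iUnion_subset fun n => subset_normalClosure.trans
    (le_iSup (fun n => normalClosure (s n)) n)

end Subgroup

section Generators

variable {X : Type*} [Group X] {x : ℤ → X}

theorem XIcc_mono_s10 {a a' b b' : ℤ} (ha : a' ≤ a) (hb : b ≤ b') : XIcc x a b ≤ XIcc x a' b' :=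
  closure_mono (Set.image_mono (Set.Icc_subset_Icc ha hb))

theorem XIcc_le_XIci {a b : ℤ} : XIcc x a b ≤ XIci x a :=
  closure_mono (Set.image_mono Set.Icc_subset_Ici_self)

theorem XIci_mono {a a' : ℤ} (h : a' ≤ a) : XIci x a ≤ XIci x a' :=
  closure_mono (Set.image_mono (Set.Ici_subset_Ici.mpr h))

theorem exists_mem_XIcc_of_mem_XIic {m : ℤ} {g : X} (hg : g ∈ XIic x m) :
    ∃ n : ℕ, g ∈ XIcc x (m - n) m := by
  have hIic : Set.Iic m = ⋃ n : ℕ, Set.Icc (m - n) m := by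
    ext k
    simp only [Set.mem_Iic, Set.mem_iUnion, Set.mem_Icc]
    exact ⟨fun h => ⟨(m - k).toNat, by omega, h⟩, fun ⟨_, h⟩ => h.2⟩
  have hdir : Directed (· ≤ ·) fun n : ℕ => XIcc x (m - n) m :=
    Monotone.directed_le fun _ _ h => XIcc_mono_s10 (by omega) le_rfl
  rw [XIic, hIic, Set.image_iUnion, Subgroup.closure_iUnion] at hg
  exact (mem_iSup_of_directed hdir).mp hg

theorem exists_mem_XIcc_of_mem_XIci {n : ℤ} {g : X} (hg : g ∈ XIci x n) :
    ∃ m : ℕ, g ∈ XIcc x n m := by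
  have hIci : Set.Ici n = ⋃ m : ℕ, Set.Icc n m := by
    ext k
    simp only [Set.mem_Ici, Set.mem_iUnion, Set.mem_Icc]
    exact ⟨fun h => ⟨k.toNat, h, by omega⟩, fun ⟨_, h⟩ => h.1⟩
  have hdir : Directed (· ≤ ·) fun m : ℕ => XIcc x n m :=
    Monotone.directed_le fun _ _ h => XIcc_mono_s10 le_rfl (by omega)
  rw [XIci, hIci, Set.image_iUnion, Subgroup.closure_iUnion] at hg
  exact (mem_iSup_of_directed hdir).mp hg

theorem XIcc_neg (n m : ℤ) : XIcc (fun k => x (-k)) n m = XIcc x (-m) (-n) := by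
  rw [XIcc, XIcc, ← Set.image_neg_Icc, Set.image_image]

theorem XIci_neg (n : ℤ) : XIci (fun k => x (-k)) n = XIic x (-n) := by
  rw [XIci, XIic, ← Set.image_neg_Ici, Set.image_image]

theorem XIic_neg (m : ℤ) : XIic (fun k => x (-k)) m = XIci x (-m) := by
  rw [XIci, XIic, ← Set.image_neg_Iic, Set.image_image]

end Generators

section Shift

variable {X : Type*} [Group X] {x : ℤ → X} {f : MulAut X} {c : ℤ} {Y : Subgroup X}

theorem zpow_apply_of_shift (hf : ∀ n, f (x n) = x (n + c)) (k n : ℤ) :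
    (f ^ k) (x n) = x (n + k * c) := by
  induction k using Int.induction_on generalizing n with
  | zero => simp
  | succ k ih => rw [zpow_add_one, MulAut.mul_apply, hf, ih]; ring_nf
  | pred k ih =>
    have hinv : f⁻¹ (x n) = x (n - c) :=
      (MulEquiv.symm_apply_eq f).mpr (by rw [hf, sub_add_cancel])
    rw [zpow_sub_one, MulAut.mul_apply, hinv, ih]; ring_nf

theorem map_zpow_eq_self (hY : Y.map f.toMonoidHom = Y) (k : ℤ) :
    Y.map (f ^ k).toMonoidHom = Y :=
  (MulAction.stabilizer (MulAut X) Y).zpow_mem (MulAction.mem_stabilizer_iff.mpr hY) k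

variable (hf : ∀ n, f (x n) = x (n + c))
include hf

theorem map_XIcc_of_shift (a b : ℤ) :
    (XIcc x a b).map f.toMonoidHom = XIcc x (a + c) (b + c) := by
  rw [XIcc, XIcc, MonoidHom.map_closure, Set.image_image, ← Set.image_add_const_Icc,
    Set.image_image]
  simp only [MulEquiv.coe_toMonoidHom, hf]

theorem map_XIic_of_shift (b : ℤ) :
    (XIic x b).map f.toMonoidHom = XIic x (b + c) := by
  rw [XIic, XIic, MonoidHom.map_closure, Set.image_image, ← Set.image_add_const_Iic,
    Set.image_image]
  simp only [MulEquiv.coe_toMonoidHom, hf]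

theorem map_inf_XIcc_of_shift (hY : Y.map f.toMonoidHom = Y) (a b : ℤ) :
    (Y ⊓ XIcc x a b).map f.toMonoidHom = Y ⊓ XIcc x (a + c) (b + c) := by
  rw [map_inf _ _ _ f.injective, hY, map_XIcc_of_shift hf]

theorem map_normalClosure_inf_XIcc_of_shift (hY : Y.map f.toMonoidHom = Y) (a b : ℤ) :
    (normalClosure ((Y ⊓ XIcc x a b : Subgroup X) : Set X)).map f.toMonoidHom =
      normalClosure ((Y ⊓ XIcc x (a + c) (b + c) : Subgroup X) : Set X) := by
  rw [map_normalClosure _ _ f.surjective, ← coe_map, map_inf_XIcc_of_shift hf hY]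

theorem inf_XIic_le_normalClosure_of_shift (hY : Y.map f.toMonoidHom = Y) {a b : ℤ}
    (h : Y ⊓ XIic x b ≤ normalClosure ((Y ⊓ XIcc x a b : Subgroup X) : Set X)) :
    Y ⊓ XIic x (b + c) ≤ normalClosure ((Y ⊓ XIcc x (a + c) (b + c) : Subgroup X) : Set X) := by
  have h' := map_mono (f := f.toMonoidHom) h
  rwa [map_inf _ _ _ f.injective, hY, map_XIic_of_shift hf,
    map_normalClosure_inf_XIcc_of_shift hf hY] at h'

end Shift

section Card

variable {X : Type*} [Group X] {x : ℤ → X} {p : ℕ}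
  (hcard : ∀ n m : ℤ, n ≤ m → Nat.card (XIcc x n m) = p ^ (m - n + 1).toNat)
include hcard

theorem relIndex_XIcc_of_le (hp : p ≠ 0) {a b c d : ℤ} (hac : a ≤ c) (hcd : c ≤ d)
    (hdb : d ≤ b) : (XIcc x c d).relIndex (XIcc x a b) = p ^ (c - a + (b - d)).toNat := by
  have h := card_mul_relIndex (XIcc_mono_s10 (x := x) hac hdb)
  rw [hcard c d hcd, hcard a b (by omega),
    show (b - a + 1).toNat = (d - c + 1).toNat + (c - a + (b - d)).toNat by omega, pow_add] at h
  exact mul_left_cancel₀ (pow_ne_zero _ hp) h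

theorem XIcc_succ_inf_XIcc (hp : p.Prime) {a c d : ℤ} (hac : a ≤ c) (hcd : c ≤ d) :
    XIcc x c (d + 1) ⊓ XIcc x a d = XIcc x c d := by
  have hrel : (XIcc x c d).relIndex (XIcc x c (d + 1)) = p := by
    rw [relIndex_XIcc_of_le hcard hp.ne_zero le_rfl hcd (by omega),
      show (c - c + (d + 1 - d)).toNat = 1 by omega, pow_one]
  rcases eq_or_eq_of_relIndex_prime (le_inf (XIcc_mono_s10 le_rfl (by omega)) (XIcc_mono_s10 hac le_rfl))
    inf_le_left (hrel ▸ hp) with h | h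
  · exact h
  · exfalso
    have hx : x (d + 1) ∈ XIcc x c (d + 1) := subset_closure ⟨d + 1, ⟨by omega, le_rfl⟩, rfl⟩
    rw [← h] at hx
    have hle : XIcc x a (d + 1) ≤ XIcc x a d := by
      refine (closure_le _).mpr ?_
      rintro _ ⟨k, hk, rfl⟩
      rcases (Set.mem_Icc.mp hk).2.lt_or_eq with hlt | rfl
      · exact subset_closure ⟨k, ⟨hk.1, by omega⟩, rfl⟩
      · exact hx.2
    have h1 := relIndex_eq_one.mpr hle
    rw [relIndex_XIcc_of_le hcard hp.ne_zero le_rfl (hac.trans hcd) (by omega),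
      show (a - a + (d + 1 - d)).toNat = 1 by omega, pow_one] at h1
    exact hp.one_lt.ne' h1

theorem XIcc_inf_XIcc (hp : p.Prime) {a b c d : ℤ} (hac : a ≤ c) (hcb : c ≤ b) (hbd : b ≤ d) :
    XIcc x c d ⊓ XIcc x a b = XIcc x c b := by
  induction d, hbd using Int.leInduction with
  | base => exact inf_eq_left.mpr (XIcc_mono_s10 hac le_rfl)
  | succ d hbd ih =>
    calc XIcc x c (d + 1) ⊓ XIcc x a b = XIcc x c (d + 1) ⊓ XIcc x a d ⊓ XIcc x a b := by
          rw [inf_assoc, inf_eq_right.mpr (XIcc_mono_s10 le_rfl hbd)]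
      _ = XIcc x c b := by rw [XIcc_succ_inf_XIcc hcard hp hac (hcb.trans hbd), ih]

theorem inf_XIcc_le_closure_insert (hp : p.Prime) {Y : Subgroup X} {a b : ℤ} (hab : a < b)
    {w : X} (hw : w ∈ Y ⊓ XIcc x a b) (hwB : w ∉ XIcc x (a + 1) b) :
    Y ⊓ XIcc x a b ≤ closure (insert w ((Y ⊓ XIcc x (a + 1) b : Subgroup X) : Set X)) := by
  have hrel : (XIcc x (a + 1) b).relIndex (XIcc x a b) = p := by
    rw [relIndex_XIcc_of_le hcard hp.ne_zero (by omega) (by omega) le_rfl,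
      show (a + 1 - a + (b - b)).toNat = 1 by omega, pow_one]
  have hprime : (XIcc x (a + 1) b).relIndex (Y ⊓ XIcc x a b) = p :=
    relIndex_eq_of_le_of_not_le hp inf_le_right (hcard a b hab.le) hrel fun h => hwB (h hw)
  have h := le_closure_insert_of_relIndex_prime (hprime ▸ hp) hw hwB
  rwa [inf_assoc, inf_eq_right.mpr (XIcc_mono_s10 (by omega) le_rfl)] at h

end Card

theorem Nat.exists_bound_of_mod_two {P : ℕ → Prop} {Q : ℕ → ℕ → Prop}
    (h : ∀ n, P n → ∃ m, Q n m) :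
    ∃ B, ∀ n, P n → ∃ j m, Q j m ∧ j % 2 = n % 2 ∧ j + m ≤ B := by
  have key : ∀ ε, ∃ B, ∀ n, P n → n % 2 = ε → ∃ j m, Q j m ∧ j % 2 = ε ∧ j + m ≤ B := by
    intro ε
    by_cases hε : ∃ j, P j ∧ j % 2 = ε
    · obtain ⟨j, hj, rfl⟩ := hε
      obtain ⟨m, hm⟩ := h j hj
      exact ⟨j + m, fun _ _ _ => ⟨j, m, hm, rfl, le_rfl⟩⟩
    · simp only [not_exists, not_and] at hε
      exact ⟨0, fun n hn hnε => absurd hnε (hε n hn)⟩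
  obtain ⟨B₀, h₀⟩ := key 0
  obtain ⟨B₁, h₁⟩ := key 1
  refine ⟨B₀ + B₁, fun n hn => ?_⟩
  rcases Nat.mod_two_eq_zero_or_one n with hn2 | hn2
  · obtain ⟨j, m, hm, hj, hB⟩ := h₀ n hn hn2
    exact ⟨j, m, hm, hj.trans hn2.symm, by omega⟩
  · obtain ⟨j, m, hm, hj, hB⟩ := h₁ n hn hn2
    exact ⟨j, m, hm, hj.trans hn2.symm, by omega⟩

section FiniteCut

variable {X : Type*} [Group X] {x : ℤ → X} {Y : Subgroup X}

theorem inf_XIci_sub_le_normalClosure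
    (H : ∀ n : ℤ, Y ⊓ XIci x (n - 1) ≤ normalClosure ((Y ⊓ XIci x n : Subgroup X) : Set X))
    (n : ℤ) (k : ℕ) :
    Y ⊓ XIci x (n - k) ≤ normalClosure ((Y ⊓ XIci x n : Subgroup X) : Set X) := by
  induction k with
  | zero => rw [Nat.cast_zero, sub_zero]; exact le_normalClosure
  | succ k ih =>
    rw [Nat.cast_succ, ← sub_sub]
    exact (H (n - k)).trans (normalClosure_le_normal ih)

theorem exists_mem_normalClosure_inf_XIcc
    (H : ∀ n : ℤ, Y ⊓ XIci x (n - 1) ≤ normalClosure ((Y ⊓ XIci x n : Subgroup X) : Set X))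
    {a : ℤ} {w : X} (hw : w ∈ Y ⊓ XIci x a) :
    ∃ m : ℕ, w ∈ normalClosure ((Y ⊓ XIcc x 1 m : Subgroup X) : Set X) := by
  have hw1 : w ∈ normalClosure ((Y ⊓ XIci x 1 : Subgroup X) : Set X) :=
    inf_XIci_sub_le_normalClosure H 1 (1 - a).toNat ⟨hw.1, XIci_mono (by omega) hw.2⟩
  refine exists_mem_normalClosure_of_monotone
    (s := fun m : ℕ => ((Y ⊓ XIcc x 1 m : Subgroup X) : Set X))
    (fun _ _ h => inf_le_inf_left Y (XIcc_mono_s10 le_rfl (by omega))) (normalClosure_mono ?_ hw1)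
  rintro g ⟨hgY, hg⟩
  obtain ⟨m, hm⟩ := exists_mem_XIcc_of_mem_XIci hg
  exact Set.mem_iUnion.mpr ⟨m, hgY, hm⟩

variable {p : ℕ} (hp : p.Prime)
  (hcard : ∀ n m : ℤ, n ≤ m → Nat.card (XIcc x n m) = p ^ (m - n + 1).toNat)
  {t : MulAut X} (ht : ∀ n, t (x n) = x (n + 2)) (hY : Y.map t.toMonoidHom = Y)
include hp hcard ht hY

theorem zpow_apply_mem_inf_XIcc_notMem_XIcc {j n : ℕ} {k : ℤ} (hk : (j : ℤ) - n = k * 2)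
    (hj : 1 ≤ j) (hjn : j ≤ n) {w : X} (hw : w ∈ Y ⊓ XIcc x (-j) 0)
    (hwB : w ∉ XIcc x (1 - j) 0) :
    (t ^ k) w ∈ Y ⊓ XIcc x (-n) 0 ∧ (t ^ k) w ∉ XIcc x (1 - n) 0 := by
  have hf := zpow_apply_of_shift ht k
  have hw' : (t ^ k) w ∈ Y ⊓ XIcc x (-n) (j - n) := by
    have h := mem_map_of_mem (t ^ k).toMonoidHom hw
    rwa [map_inf_XIcc_of_shift hf (map_zpow_eq_self hY k), show -(j : ℤ) + k * 2 = -n by omega,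
      show (0 : ℤ) + k * 2 = j - n by omega] at h
  refine ⟨inf_le_inf_left Y (XIcc_mono_s10 le_rfl (by omega)) hw', fun h => hwB ?_⟩
  have h' : (t ^ k) w ∈ XIcc x (1 - n) (j - n) := by
    rw [← XIcc_inf_XIcc hcard hp (a := -n) (d := 0) (by omega) (by omega) (by omega)]
    exact ⟨h, hw'.2⟩
  rw [show (1 : ℤ) - n = 1 - j + k * 2 by omega, show (j : ℤ) - n = 0 + k * 2 by omega,
    ← map_XIcc_of_shift hf] at h'
  exact (mem_map_iff_mem (t ^ k).injective).mp h'

theorem inf_XIcc_neg_le_normalClosure {B : ℕ}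
    (hB : ∀ n : ℕ, 1 ≤ n ∧ ¬Y ⊓ XIcc x (-n) 0 ≤ XIcc x (1 - n) 0 →
      ∃ j m : ℕ, (1 ≤ j ∧ ∃ w ∈ Y ⊓ XIcc x (-j) 0, w ∉ XIcc x (1 - j) 0 ∧
        w ∈ normalClosure ((Y ⊓ XIcc x 1 m : Subgroup X) : Set X)) ∧
        j % 2 = n % 2 ∧ j + m ≤ B)
    (n : ℕ) :
    Y ⊓ XIcc x (-n) 0 ≤ normalClosure ((Y ⊓ XIcc x (-(B + 1 : ℕ)) 0 : Subgroup X) : Set X) := by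
  set C := normalClosure ((Y ⊓ XIcc x (-(B + 1 : ℕ)) 0 : Subgroup X) : Set X)
  induction n using Nat.strong_induction_on with
  | _ n IH =>
  by_cases hn : n ≤ B + 1
  · exact (inf_le_inf_left Y (XIcc_mono_s10 (by omega) le_rfl)).trans le_normalClosure
  have hprev : Y ⊓ XIcc x (1 - n) 0 ≤ C := by
    have h := IH (n - 1) (by omega)
    rwa [Nat.cast_sub (by omega), Nat.cast_one, neg_sub] at h
  by_cases hjump : Y ⊓ XIcc x (-n) 0 ≤ XIcc x (1 - n) 0
  · exact (le_inf inf_le_left hjump).trans hprev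
  obtain ⟨j, m, ⟨hj, w, hw, hwB, hwm⟩, hjn, hjm⟩ := hB n ⟨by omega, hjump⟩
  obtain ⟨k, hk⟩ : ∃ k : ℤ, (j : ℤ) - n = k * 2 := ⟨((j : ℤ) - n) / 2, by omega⟩
  obtain ⟨hw', hw'B⟩ :=
    zpow_apply_mem_inf_XIcc_notMem_XIcc hp hcard ht hY hk hj (by omega) hw hwB
  have hw'C : (t ^ k) w ∈ C := by
    have h := mem_map_of_mem (t ^ k).toMonoidHom hwm
    rw [map_normalClosure_inf_XIcc_of_shift (zpow_apply_of_shift ht k)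
      (map_zpow_eq_self hY k)] at h
    have hsub : Y ⊓ XIcc x (1 + k * 2) (m + k * 2) ≤ C :=
      (inf_le_inf_left Y (XIcc_mono_s10 (by omega) (by omega))).trans hprev
    exact normalClosure_le_normal hsub h
  have hgen := inf_XIcc_le_closure_insert hcard hp (a := -n) (b := 0) (by omega) hw'
    (by rwa [neg_add_eq_sub])
  rw [neg_add_eq_sub] at hgen
  exact hgen.trans ((closure_le C).mpr (Set.insert_subset hw'C (by exact_mod_cast hprev)))

theorem exists_inf_XIic_le_normalClosure
    (H : ∀ n : ℤ, Y ⊓ XIci x (n - 1) ≤ normalClosure ((Y ⊓ XIci x n : Subgroup X) : Set X)) :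
    ∃ M : ℕ, Y ⊓ XIic x 0 ≤ normalClosure ((Y ⊓ XIcc x (-M) 0 : Subgroup X) : Set X) := by
  obtain ⟨B, hB⟩ := Nat.exists_bound_of_mod_two
    (P := fun n : ℕ => 1 ≤ n ∧ ¬Y ⊓ XIcc x (-n) 0 ≤ XIcc x (1 - n) 0)
    (Q := fun j m : ℕ => 1 ≤ j ∧ ∃ w ∈ Y ⊓ XIcc x (-j) 0, w ∉ XIcc x (1 - j) 0 ∧
        w ∈ normalClosure ((Y ⊓ XIcc x 1 m : Subgroup X) : Set X)) fun j ⟨hj, hjump⟩ => by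
      obtain ⟨w, hw, hwB⟩ := SetLike.not_le_iff_exists.mp hjump
      obtain ⟨m, hm⟩ := exists_mem_normalClosure_inf_XIcc H ⟨hw.1, XIcc_le_XIci hw.2⟩
      exact ⟨m, hj, w, hw, hwB, hm⟩
  refine ⟨B + 1, fun g hg => ?_⟩
  obtain ⟨n, hn⟩ := exists_mem_XIcc_of_mem_XIic hg.2
  exact inf_XIcc_neg_le_normalClosure hp hcard ht hY hB n ⟨hg.1, by rwa [zero_sub] at hn⟩

end FiniteCut

/-- Let `Y` be a shift-invariant subgroup of a ℤ-system of prime order.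
(i) If `Y_{n-1,∞} ≤ ⟨Y_{n,∞}⟩^X` for all `n`, then `Y_{-∞,M} ≤ ⟨Y_{0,M}⟩^X` for some `M ∈ ℕ`.
(ii) If `Y_{-∞,n+1} ≤ ⟨Y_{-∞,n}⟩^X` for all `n`, then `Y_{0,∞} ≤ ⟨Y_{0,M}⟩^X` for some `M ∈ ℕ`. -/
theorem shift_invariant_finite_cut (p : ℕ) (hp : p.Prime) {X : Type*} [Group X]
    (x : ℤ → X) (hX : IsZSystem p x)
    (t : MulAut X) (ht : ∀ n : ℤ, t (x n) = x (n + 2))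
    (Y : Subgroup X) (hY : Subgroup.map t.toMonoidHom Y = Y) :
    ((∀ n : ℤ, Y ⊓ XIci x (n - 1) ≤
        Subgroup.normalClosure ((Y ⊓ XIci x n : Subgroup X) : Set X)) →
      ∃ M : ℕ, Y ⊓ XIic x (M : ℤ) ≤
        Subgroup.normalClosure ((Y ⊓ XIcc x 0 (M : ℤ) : Subgroup X) : Set X)) ∧
    ((∀ n : ℤ, Y ⊓ XIic x (n + 1) ≤
        Subgroup.normalClosure ((Y ⊓ XIic x n : Subgroup X) : Set X)) →
      ∃ M : ℕ, Y ⊓ XIci x 0 ≤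
        Subgroup.normalClosure ((Y ⊓ XIcc x 0 (M : ℤ) : Subgroup X) : Set X)) := by
  refine ⟨fun H => ?_, fun H => ?_⟩
  · obtain ⟨M, hM⟩ := exists_inf_XIic_le_normalClosure hp hX.card_Icc ht hY H
    have hM2 : Y ⊓ XIic x 0 ≤ normalClosure ((Y ⊓ XIcc x (-(M * 2)) 0 : Subgroup X) : Set X) :=
      hM.trans (normalClosure_mono (inf_le_inf_left Y (XIcc_mono_s10 (by omega) le_rfl)))
    refine ⟨M * 2, ?_⟩
    simpa using inf_XIic_le_normalClosure_of_shift (zpow_apply_of_shift ht M)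
      (map_zpow_eq_self hY M) hM2
  · have hcard : ∀ n m : ℤ, n ≤ m →
        Nat.card (XIcc (fun k => x (-k)) n m) = p ^ (m - n + 1).toNat := fun n m h => by
      rw [XIcc_neg, hX.card_Icc _ _ (by omega), neg_sub_neg]
    have ht' : ∀ n, (t ^ (-1 : ℤ)) (x (-n)) = x (-(n + 2)) := fun n => by
      rw [zpow_apply_of_shift ht]; ring_nf
    obtain ⟨M, hM⟩ := exists_inf_XIic_le_normalClosure hp hcard ht' (map_zpow_eq_self hY (-1))
      fun n => by rw [XIci_neg, XIci_neg, neg_sub, sub_eq_neg_add]; exact H (-n)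
    exact ⟨M, by simpa [XIic_neg, XIcc_neg] using hM⟩
end

section
/- Let p be a prime, let G be a p-group (every element of G has order a power of p), and let N be a normal subgroup of G which is nilpotent of finite exponent and of finite index in G. Then G is nilpotent of finite exponent. -/
/-!
Since `g ^ [G : N] ∈ N`, the `p`-group `G` has finite exponent, hence exponent dividing some
`p ^ r`. Nilpotency then goes by induction on `[G : N]`: if `N ≠ G`, pick `t` whose image is a
nontrivial central element of the finite `p`-group `G ⧸ N`; then `K = ⟨t⟩N` is normal of smaller
index, and it is again nilpotent. Indeed, `N` acts trivially on each abelian factor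
`γᵢ(N) / γᵢ₊₁(N)`, so `K` acts on it through `T`, conjugation by `t`; commutation with `t ^ j * n`
acts as `1 - T ^ j`, a multiple of `T - 1`, and `T - 1` is nilpotent because `T ^ p ^ r = 1` and
the factor has exponent dividing `p ^ r`. So boundedly many commutations with `K` push `γᵢ(N)` into
`γᵢ₊₁(N)`, and as `⁅K, K⁆ ≤ N` the lower central series of `K` reaches `⊥`.
-/

open scoped commutatorElement

theorem commutatorElement_mul_of_commute {G : Type*} [Group G] {a n : G} (y : G)
    (h : Commute a n) : ⁅a, y * n⁆ = ⁅a, y⁆ := by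
  calc ⁅a, y * n⁆ = a * y * (n * a⁻¹ * n⁻¹) * y⁻¹ := by group
    _ = ⁅a, y⁆ := by rw [h.inv_left.symm.mul_inv_cancel, commutatorElement_def]

theorem one_sub_pow_mul_sub_one_pow {R : Type*} [Ring R] (T : R) (i j : ℕ) :
    (1 - T ^ j) * (T - 1) ^ i = (T - 1) ^ (i + 1) * -∑ l ∈ Finset.range j, T ^ l := by
  have hc : Commute (T - 1) (∑ l ∈ Finset.range j, T ^ l) :=
    Commute.sum_right _ _ _ fun l _ => ((Commute.refl T).sub_left (Commute.one_left T)).pow_right l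
  rw [← neg_sub, ← geom_sum_mul, neg_mul, mul_assoc, ← pow_succ', ← (hc.pow_left _).eq, mul_neg]

theorem sub_one_pow_eq_zero_of_pow_eq_one {R : Type*} [Ring R] {p r m : ℕ} (hp : p.Prime) {T : R}
    (hT : T ^ p ^ r = 1) (hR : (p : R) ^ m = 0) : (T - 1) ^ (p ^ r * m) = 0 := by
  obtain ⟨S, hS⟩ : ∃ S, (T - 1) ^ p ^ r = p * S := by
    -- expand `1 = ((T - 1) + 1) ^ p ^ r`: all middle binomial coefficients are divisible by `p`
    have h := (Commute.one_right (T - 1)).add_pow_prime_pow_eq' hp r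
    rw [sub_add_cancel, hT, one_pow, eq_comm, add_right_comm, add_eq_right] at h
    exact ⟨_, (eq_neg_of_add_eq_zero_left h).trans (mul_neg _ _).symm⟩
  rw [pow_mul, hS, (Nat.cast_commute p S).mul_pow, hR, zero_mul]

namespace Subgroup

variable {G : Type*} [Group G]

def iteratedCommutator (A K : Subgroup G) : ℕ → Subgroup G
  | 0 => A
  | n + 1 => ⁅iteratedCommutator A K n, K⁆

section IteratedCommutator

variable (A K : Subgroup G)

@[simp]
theorem iteratedCommutator_succ (n : ℕ) :
    iteratedCommutator A K (n + 1) = ⁅iteratedCommutator A K n, K⁆ := rfl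

theorem iteratedCommutator_add (m n : ℕ) :
    iteratedCommutator A K (m + n) = iteratedCommutator (iteratedCommutator A K m) K n := by
  induction n with
  | zero => rfl
  | succ n ih => rw [← add_assoc, iteratedCommutator_succ, ih, iteratedCommutator_succ]

theorem iteratedCommutator_self (n : ℕ) :
    iteratedCommutator A A n = A.lowerCentralSeries n := by
  induction n with
  | zero => rfl
  | succ n ih => rw [iteratedCommutator_succ, ih, lowerCentralSeries_succ]

theorem map_iteratedCommutator {H : Type*} [Group H] (f : G →* H) (n : ℕ) :
    (iteratedCommutator A K n).map f = iteratedCommutator (A.map f) (K.map f) n := by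
  induction n with
  | zero => rfl
  | succ n ih => rw [iteratedCommutator_succ, map_commutator, ih, iteratedCommutator_succ]

variable {A K}

theorem iteratedCommutator_mono {B : Subgroup G} (hAB : A ≤ B) (n : ℕ) :
    iteratedCommutator A K n ≤ iteratedCommutator B K n := by
  induction n with
  | zero => exact hAB
  | succ n ih => exact commutator_mono ih le_rfl

theorem iteratedCommutator_le_of_commutator_le {V : ℕ → Subgroup G} (h0 : A ≤ V 0)
    (hV : ∀ i, ⁅V i, K⁆ ≤ V (i + 1)) (n : ℕ) : iteratedCommutator A K n ≤ V n := by
  induction n with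
  | zero => exact h0
  | succ n ih => exact (commutator_mono ih le_rfl).trans (hV n)

end IteratedCommutator

theorem normal_of_le_center {H : Subgroup G} (h : H ≤ center G) : H.Normal :=
  ⟨fun x hx g => by rwa [mem_center_iff.mp (h hx) g, mul_inv_cancel_right]⟩

theorem commutator_zpowers_sup_le (t : G) (N : Subgroup G) [N.Normal] :
    ⁅zpowers t ⊔ N, zpowers t ⊔ N⁆ ≤ N := by
  suffices h : ⁅zpowers t ⊔ N, zpowers t ⊔ N⁆.map (QuotientGroup.mk' N) = ⊥ by
    rwa [map_eq_bot_iff, QuotientGroup.ker_mk'] at h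
  rw [map_commutator, map_sup, QuotientGroup.map_mk'_self, sup_bot_eq, MonoidHom.map_zpowers,
    commutator_self_eq_bot_iff]
  infer_instance

section ConjEnd

open scoped IsMulCommutative

variable (A : Subgroup G) [A.Normal] [IsMulCommutative A]

def conjEnd : G →* Module.End ℤ (Additive A) where
  toFun g := (MulAut.conjNormal g).toMonoidHom.toAdditive.toIntLinearMap
  map_one' := by ext z; simp
  map_mul' _ _ := by ext z; simp [mul_assoc]

theorem commutatorElement_eq_toMul_one_sub_conjEnd (a : A) (g : G) :
    ⁅(a : G), g⁆ = (((1 - conjEnd A g) (.ofMul a)).toMul : G) := by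
  simp [commutatorElement_def, div_eq_mul_inv, mul_assoc, conjEnd]

theorem iteratedCommutator_zpowers_sup_eq_bot {p r m : ℕ} (hp : p.Prime) {t : G}
    (ht : t ^ p ^ r = 1) (hA : ∀ a ∈ A, a ^ p ^ m = 1) {N : Subgroup G} [N.Normal]
    (hAN : ⁅A, N⁆ = ⊥) : iteratedCommutator A (zpowers t ⊔ N) (p ^ r * m) = ⊥ := by
  set U := conjEnd A t - 1
  have hU : U ^ (p ^ r * m) = 0 := by
    refine sub_one_pow_eq_zero_of_pow_eq_one hp (by rw [← map_pow, ht, map_one]) ?_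
    ext z
    rw [← Nat.cast_pow, Module.End.natCast_apply, LinearMap.zero_apply]
    simpa using hA _ z.toMul.2
  let V : ℕ → Subgroup G := fun i =>
    ((LinearMap.range (U ^ i)).toAddSubgroup.toSubgroup).map A.subtype
  have mem_V {i : ℕ} {x : G} : x ∈ V i ↔ ∃ z, (((U ^ i) z).toMul : G) = x :=
    ⟨fun ⟨_, ⟨z, hz⟩, hx⟩ => ⟨z, hz ▸ hx⟩, fun ⟨z, hz⟩ => ⟨_, ⟨z, rfl⟩, hz⟩⟩
  have hV (i : ℕ) : ⁅V i, zpowers t ⊔ N⁆ ≤ V (i + 1) := by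
    rw [commutator_le]
    rintro _ hv x hx
    obtain ⟨z, rfl⟩ := mem_V.1 hv
    obtain ⟨y, hy, n, hn, rfl⟩ := mem_sup_of_normal_right.1 hx
    obtain ⟨j, rfl⟩ := ((isOfFinOrder_iff_pow_eq_one.2
      ⟨p ^ r, pow_pos hp.pos r, ht⟩).mem_powers_iff_mem_zpowers.2 hy)
    have hcomm : Commute (((U ^ i) z).toMul : G) n := (mem_centralizer_iff.1
      (commutator_eq_bot_iff_le_centralizer.1 hAN (SetLike.coe_mem _)) n hn).symm
    rw [commutatorElement_mul_of_commute _ hcomm, commutatorElement_eq_toMul_one_sub_conjEnd,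
      ofMul_toMul, map_pow, ← Module.End.mul_apply, one_sub_pow_mul_sub_one_pow]
    exact mem_V.2 ⟨_, rfl⟩
  have hVA : A ≤ V 0 := fun a ha => mem_V.2 ⟨.ofMul ⟨a, ha⟩, rfl⟩
  refine eq_bot_iff.2 ((iteratedCommutator_le_of_commutator_le hVA hV _).trans fun x hx => ?_)
  obtain ⟨z, rfl⟩ := mem_V.1 hx
  simp [hU]

end ConjEnd

section Nilpotent

variable {p r : ℕ}

theorem iteratedCommutator_zpowers_sup_le (hp : p.Prime) (hG : ∀ g : G, g ^ p ^ r = 1)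
    {A B N : Subgroup G} [A.Normal] [B.Normal] [N.Normal] (hAN : A ≤ N) (hB : ⁅A, N⁆ ≤ B)
    (t : G) : iteratedCommutator A (zpowers t ⊔ N) (p ^ r * r) ≤ B := by
  set f := QuotientGroup.mk' B
  have hf : Function.Surjective f := QuotientGroup.mk'_surjective B
  have hpow (g : G) : f g ^ p ^ r = 1 := by rw [← map_pow, hG, map_one]
  have hAN' : ⁅A.map f, N.map f⁆ = ⊥ := by
    rwa [← map_commutator, map_eq_bot_iff, QuotientGroup.ker_mk']
  have : (A.map f).Normal := .map ‹_› f hf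
  have : (N.map f).Normal := .map ‹_› f hf
  have : IsMulCommutative (A.map f) := le_centralizer_iff_isMulCommutative.1 <|
    (commutator_eq_bot_iff_le_centralizer.1 hAN').trans (centralizer_le (map_mono hAN))
  have h := iteratedCommutator_zpowers_sup_eq_bot (A.map f) hp (hpow t)
    (by rintro _ ⟨g, -, rfl⟩; exact hpow g) hAN'
  rwa [← MonoidHom.map_zpowers, ← map_sup, ← map_iteratedCommutator, map_eq_bot_iff,
    QuotientGroup.ker_mk'] at h

theorem isNilpotent_zpowers_sup (hp : p.Prime) (hG : ∀ g : G, g ^ p ^ r = 1)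
    {N : Subgroup G} [N.Normal] [Group.IsNilpotent N] (t : G) :
    Group.IsNilpotent (zpowers t ⊔ N : Subgroup G) := by
  obtain ⟨d, hd⟩ := (isNilpotent_iff_lowerCentralSeries N).1 ‹_›
  have hle (i : ℕ) :
      iteratedCommutator N (zpowers t ⊔ N) (p ^ r * r * i) ≤ N.lowerCentralSeries i := by
    induction i with
    | zero => exact le_rfl
    | succ i ih =>
      rw [mul_add_one, iteratedCommutator_add]
      exact (iteratedCommutator_mono ih _).trans
        (iteratedCommutator_zpowers_sup_le hp hG (lowerCentralSeries_le_self N i) le_rfl t)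
  refine isNilpotent_of_lowerCentralSeries_eq_bot (n := 1 + p ^ r * r * d) ?_
  rw [← iteratedCommutator_self, iteratedCommutator_add, eq_bot_iff, ← hd]
  exact (iteratedCommutator_mono (commutator_zpowers_sup_le t N) _).trans (hle d)

theorem isNilpotent_of_isNilpotent_of_finiteIndex (hp : p.Prime) (hG : ∀ g : G, g ^ p ^ r = 1)
    (N : Subgroup G) [N.Normal] [N.FiniteIndex] [Group.IsNilpotent N] :
    Group.IsNilpotent G := by
  induction h : N.index using Nat.strong_induction_on generalizing N with
  | _ n ih =>
  by_cases hNtop : N = ⊤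
  · subst hNtop
    exact Group.isNilpotent_top.1 ‹_›
  have : Fact p.Prime := ⟨hp⟩
  have : Nontrivial (G ⧸ N) := QuotientGroup.nontrivial_iff.2 hNtop
  have := (IsPGroup.to_quotient (fun g => ⟨r, hG g⟩) N).center_nontrivial
  obtain ⟨⟨z, hz⟩, hz1⟩ := exists_ne (1 : center (G ⧸ N))
  obtain ⟨t, rfl⟩ := QuotientGroup.mk'_surjective N z
  have hK : zpowers t ⊔ N = (zpowers (QuotientGroup.mk' N t)).comap (QuotientGroup.mk' N) := by
    rw [← MonoidHom.map_zpowers, comap_map_eq, QuotientGroup.ker_mk']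
  have hNK : N < zpowers t ⊔ N := SetLike.lt_iff_le_and_exists.2 ⟨le_sup_right, t,
    mem_sup_left (mem_zpowers t), fun ht => hz1 (Subtype.ext ((QuotientGroup.eq_one_iff t).2 ht))⟩
  have : (zpowers t ⊔ N).Normal := hK ▸ (normal_of_le_center (zpowers_le.2 hz)).comap _
  have : (zpowers t ⊔ N).FiniteIndex := finiteIndex_of_le le_sup_right
  have := isNilpotent_zpowers_sup hp hG t (N := N)
  exact ih _ (h ▸ index_strictAnti hNK) (zpowers t ⊔ N) rfl

end Nilpotent

end Subgroup

theorem IsPGroup.pow_prime_pow_eq_one {G : Type*} [Group G] {p e : ℕ} (hp : p.Prime)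
    (hG : IsPGroup p G) (he : 0 < e) (h : ∀ g : G, g ^ e = 1) (g : G) : g ^ p ^ e = 1 := by
  have : Fact p.Prime := ⟨hp⟩
  obtain ⟨k, hk⟩ := IsPGroup.iff_orderOf.1 hG g
  rw [← orderOf_dvd_iff_pow_eq_one, hk]
  exact pow_dvd_pow p <|
    (Nat.lt_pow_self hp.one_lt).le.trans (hk ▸ orderOf_le_of_pow_eq_one he (h g))

/-- Let `G` be a `p`-group and `N ⊴ G` nilpotent of finite exponent and of finite index
in `G`. Then `G` is nilpotent of finite exponent. -/
theorem nilpotent_extension (p : ℕ) (hp : p.Prime) {G : Type*} [Group G]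
    (hG : IsPGroup p G) (N : Subgroup G) (hN : N.Normal)
    (hnil : Group.IsNilpotent N)
    (hexp : ∃ e : ℕ, 0 < e ∧ ∀ g ∈ N, g ^ e = 1)
    (hidx : N.FiniteIndex) :
    Group.IsNilpotent G ∧ ∃ e : ℕ, 0 < e ∧ ∀ g : G, g ^ e = 1 := by
  obtain ⟨e, he, hNe⟩ := hexp
  have hGe (g : G) : g ^ (N.index * e) = 1 := by rw [pow_mul]; exact hNe _ (N.pow_index_mem g)
  have hpos : 0 < N.index * e := Nat.mul_pos (Nat.pos_of_ne_zero hidx.index_ne_zero) he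
  exact ⟨Subgroup.isNilpotent_of_isNilpotent_of_finiteIndex hp
    (hG.pow_prime_pow_eq_one hp hpos hGe) N, _, hpos, hGe⟩
end
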